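/- arXiv:0709.2868 — 2 statements merged into one kernel-verified Lean document; each statement's English description precedes it below -/
import Mathlib

section
/- Let G be a group acting faithfully and transitively on a finite set Ω of prime cardinality p ≥ 5, with |G| > p. Then G has a unique Sylow p-subgroup if and only if G is a solvable group. -/
/-!
A transitive group of prime degree `p` is primitive, so its nontrivial normal subgroups are
transitive; and since `|G|` divides `p!`, its Sylow `p`-subgroups have order `p`. An abelian
transitive subgroup is regular and contains its centralizer.

If the Sylow `p`-subgroup `P` is normal, it is transitive and cyclic, so `G / P = G / C_G(P)`
embeds into the abelian group `Aut P` and `G` is solvable. Conversely, a solvable `G` has a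
nontrivial abelian normal subgroup (the last nontrivial term of its derived series); it is
transitive, hence regular of order `p`, hence a normal Sylow `p`-subgroup.
-/

open MulAction Subgroup

theorem Nat.Prime.not_sq_dvd_factorial {p : ℕ} (hp : p.Prime) : ¬ p ^ 2 ∣ p.factorial := by
  rw [← Nat.mul_factorial_pred hp.ne_zero, sq, Nat.mul_dvd_mul_iff_left hp.pos,
    hp.dvd_factorial]
  have := hp.pos
  omega

theorem Sylow.card_eq_of_dvd_of_not_sq_dvd {G : Type*} [Group G] [Finite G] {p : ℕ}
    [Fact p.Prime] (P : Sylow p G) (hdvd : p ∣ Nat.card G) (hsq : ¬ p ^ 2 ∣ Nat.card G) :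
    Nat.card P = p := by
  obtain ⟨k, hk⟩ := IsPGroup.iff_card.mp P.isPGroup'
  have hk0 : k ≠ 0 := by
    rintro rfl
    exact P.ne_bot_of_dvd_card hdvd (card_eq_one.mp (by simpa using hk))
  have hk2 : k < 2 := by
    by_contra! h
    exact hsq ((pow_dvd_pow p h).trans (hk ▸ P.card_subgroup_dvd_card))
  rw [hk, show k = 1 by omega, pow_one]

theorem Group.IsSolvable.exists_normal_isMulCommutative_ne_bot {G : Type*} [Group G]
    [hG : Group.IsSolvable G] [Nontrivial G] :
    ∃ N : Subgroup G, N.Normal ∧ IsMulCommutative N ∧ N ≠ ⊥ := by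
  obtain ⟨n, hn⟩ := hG.solvable
  induction n with
  | zero => exact absurd hn top_ne_bot
  | succ n ih =>
    by_cases hbot : derivedSeries G n = ⊥
    · exact ih hbot
    · refine ⟨_, derivedSeries_normal G n, ?_, hbot⟩
      rwa [← commutator_self_eq_bot_iff]

theorem Group.isSolvable_of_isCyclic_of_centralizer_le {G : Type*} [Group G] {N : Subgroup G}
    [N.Normal] [IsCyclic N] (hN : centralizer N ≤ N) : Group.IsSolvable G := by
  have : Group.IsSolvable N := isSolvable_of_comm mul_comm'
  have : Group.IsSolvable (MulAut N) :=
    isSolvable_of_isSolvable_injective (f := (IsCyclic.mulAutMulEquiv N).toMonoidHom)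
      (IsCyclic.mulAutMulEquiv N).injective
  refine isSolvable_of_ker_le_range N.subtype (MulAut.conjNormal (H := N)) fun x hx ↦ ?_
  have hxN : x ∈ N := hN <| mem_centralizer_iff.mpr fun n hn ↦ by
    have hconj : x * n * x⁻¹ = n := by
      simpa using congr_arg Subtype.val (DFunLike.congr_fun hx ⟨n, hn⟩)
    exact eq_mul_inv_iff_mul_eq.mp hconj.symm
  exact ⟨⟨x, hxN⟩, rfl⟩

section FaithfulAction

variable {G Ω : Type*} [Group G] [MulAction G Ω] [FaithfulSMul G Ω]

variable (G Ω) in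
theorem MulAction.finite_of_faithfulSMul [Finite Ω] : Finite G :=
  Finite.of_injective _ (toPerm_injective (α := G) (β := Ω))

theorem MulAction.card_dvd_factorial [Finite Ω] : Nat.card G ∣ (Nat.card Ω).factorial :=
  Nat.card_perm (α := Ω) ▸ card_dvd_of_injective (toPermHom G Ω) toPerm_injective

theorem Subgroup.eq_one_of_mem_centralizer_of_smul_eq_self {N : Subgroup G}
    [IsPretransitive N Ω] {x : G} (hx : x ∈ centralizer N) {a : Ω} (ha : x • a = a) :
    x = 1 := by
  refine eq_of_smul_eq_smul (α := Ω) fun b ↦ ?_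
  obtain ⟨n, rfl⟩ := MulAction.exists_smul_eq N a b
  rw [one_smul, Subgroup.smul_def, ← mul_smul, ← hx n n.2, mul_smul, ha]

theorem Subgroup.centralizer_le_of_isPretransitive {N : Subgroup G} [IsMulCommutative N]
    [IsPretransitive N Ω] [Nonempty Ω] : centralizer N ≤ N := by
  intro x hx
  obtain ⟨a⟩ := ‹Nonempty Ω›
  obtain ⟨n, hn⟩ := MulAction.exists_smul_eq N a (x • a)
  have hnx : (n : G)⁻¹ * x = 1 := by
    refine eq_one_of_mem_centralizer_of_smul_eq_self (N := N) (mul_mem ?_ hx) (a := a) ?_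
    · exact le_centralizer N (inv_mem n.2)
    · rw [mul_smul, ← hn, Subgroup.smul_def, inv_smul_smul]
  rw [← inv_mul_eq_one.mp hnx]
  exact n.2

theorem Subgroup.card_eq_of_isPretransitive {N : Subgroup G} [IsMulCommutative N]
    [IsPretransitive N Ω] (a : Ω) : Nat.card N = Nat.card Ω := by
  have hstab : stabilizer N a = ⊥ := by
    refine (eq_bot_iff_forall _).mpr fun n hn ↦ Subtype.ext ?_
    exact eq_one_of_mem_centralizer_of_smul_eq_self (N := N) (le_centralizer N n.2) hn
  rw [← index_stabilizer_of_transitive N a, hstab, index_bot]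

variable [IsPretransitive G Ω]

theorem MulAction.isPretransitive_of_normal_of_prime_card (hΩ : (Nat.card Ω).Prime)
    {N : Subgroup G} [N.Normal] (hN : N ≠ ⊥) : IsPretransitive N Ω := by
  have := IsPreprimitive.of_prime_card (G := G) hΩ
  refine IsQuasiPreprimitive.isPretransitive_of_normal fun hfix ↦ hN ?_
  refine (eq_bot_iff_forall _).mpr fun n hn ↦ eq_of_smul_eq_smul (α := Ω) fun a ↦ ?_
  rw [one_smul]
  exact (Set.eq_univ_iff_forall.mp hfix a) ⟨n, hn⟩

theorem Sylow.card_eq_of_prime_card [Finite Ω] {p : ℕ} [Fact p.Prime]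
    (hΩ : Nat.card Ω = p) (P : Sylow p G) : Nat.card P = p := by
  have := finite_of_faithfulSMul G Ω
  obtain ⟨a⟩ : Nonempty Ω := (Nat.card_pos_iff.mp (hΩ ▸ Fact.out (p := p.Prime)).pos).1
  have hdvd : p ∣ Nat.card G :=
    hΩ ▸ index_stabilizer_of_transitive G a ▸ (stabilizer G a).index_dvd_card
  exact P.card_eq_of_dvd_of_not_sq_dvd hdvd fun h ↦
    Nat.Prime.not_sq_dvd_factorial Fact.out (h.trans (hΩ ▸ card_dvd_factorial))

end FaithfulAction

theorem unique_sylow_iff_solvable_of_prime_degree_general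
    (G : Type*) [Group G] (Ω : Type*) [Fintype Ω]
    [MulAction G Ω] [FaithfulSMul G Ω] (htrans : MulAction.IsPretransitive G Ω)
    (p : ℕ) (hp : p.Prime) (hΩ : Fintype.card Ω = p) :
    (∀ P Q : Sylow p G, P = Q) ↔ IsSolvable G := by
  have := Fact.mk hp
  have := htrans
  have := finite_of_faithfulSMul G Ω
  have hΩ' : Nat.card Ω = p := Nat.card_eq_fintype_card.trans hΩ
  have hΩprime : (Nat.card Ω).Prime := hΩ'.symm ▸ hp
  have : Nonempty Ω := Fintype.card_pos_iff.mp (hΩ ▸ hp.pos)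
  obtain ⟨P⟩ : Nonempty (Sylow p G) := inferInstance
  have hPcard : Nat.card P = p := P.card_eq_of_prime_card hΩ'
  have hPbot : (P : Subgroup G) ≠ ⊥ := fun h ↦ hp.one_lt.ne' (by rw [← hPcard, h, card_bot])
  constructor
  · intro h
    have : Subsingleton (Sylow p G) := ⟨h⟩
    have := P.normal_of_subsingleton
    have := isCyclic_of_prime_card hPcard
    have := isPretransitive_of_normal_of_prime_card hΩprime hPbot
    exact Group.isSolvable_of_isCyclic_of_centralizer_le
      (centralizer_le_of_isPretransitive (N := P) (Ω := Ω))
  · intro hG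
    have : Group.IsSolvable G := hG
    have := (nontrivial_iff_ne_bot _).mpr hPbot
    have : Nontrivial G := (P : Subgroup G).subtype_injective.nontrivial
    obtain ⟨N, hN, hNcomm, hNbot⟩ :=
      Group.IsSolvable.exists_normal_isMulCommutative_ne_bot (G := G)
    have := isPretransitive_of_normal_of_prime_card hΩprime hNbot
    have hNcard : Nat.card N = p := (card_eq_of_isPretransitive (Classical.arbitrary Ω)).trans hΩ'
    obtain ⟨Q, hNQ⟩ :=
      (IsPGroup.of_card (n := 1) (hNcard.trans (pow_one p).symm)).exists_le_sylow
    have hNQ : N = Q := eq_of_le_of_card_ge hNQ (by rw [hNcard, Q.card_eq_of_prime_card hΩ'])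
    have := Sylow.unique_of_normal Q (hNQ ▸ hN)
    exact fun _ _ ↦ Subsingleton.elim _ _

/-- Let `G` act faithfully and transitively on a finite set `Ω` of prime cardinality
`p ≥ 5`, with `|G| > p`. Then `G` has a unique Sylow `p`-subgroup if and only if `G` is
solvable. -/
theorem unique_sylow_iff_solvable_of_prime_degree
    (G : Type*) [Group G] [Fintype G] (Ω : Type*) [Fintype Ω]
    [MulAction G Ω] [FaithfulSMul G Ω] (htrans : MulAction.IsPretransitive G Ω)
    (p : ℕ) (hp : p.Prime) (hp5 : 5 ≤ p) (hΩ : Fintype.card Ω = p)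
    (hG : p < Fintype.card G) :
    (∀ P Q : Sylow p G, P = Q) ↔ IsSolvable G :=
  unique_sylow_iff_solvable_of_prime_degree_general G Ω htrans p hp hΩ
end

section
/- Let q be a prime, let m be a primitive root modulo q, let n > 1 be an even divisor of q − 1 such that (q − 1)/n is odd, let ζ_q = exp(2πi/q) ∈ ℂ, and set α_n = Σ_{j=0}^{(q−1)/n − 1} ζ_q^{m^{jn}}. Then α_n is not a real number. In particular, ℚ(α_n)/ℚ is a non-real cyclic extension of degree n. -/
/-!
Let `H ≤ (ZMod q)ˣ` be the subgroup of index `n` generated by `m ^ n`, so that `α` is the sum of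
`ζ ^ h` over `h ∈ H`. The automorphism `ζ ↦ ζ ^ t` of `ℚ(ζ)` sends `α` to the period of the coset
`tH`, and since `ζ, ζ², …, ζ^(q-1)` are linearly independent over `ℚ`, it fixes `α` exactly when
`t ∈ H`. By Galois theory `ℚ(α)` is the fixed field of `H` inside the cyclic extension `ℚ(ζ)`,
so it is cyclic of degree `[(ZMod q)ˣ : H] = n`. Complex conjugation is `t = -1`, which lies
outside `H` because `H` has odd order `(q - 1)/n`; hence `α` is not real.
-/

open Polynomial IntermediateField

theorem pow_zmod_val_natCast {M : Type*} [Monoid M] {p : ℕ} {ζ : M} (hζ : ζ ^ p = 1) (k : ℕ) :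
    ζ ^ (k : ZMod p).val = ζ ^ k := by
  conv_rhs => rw [← Nat.mod_add_div k p, pow_add, pow_mul, hζ, one_pow, mul_one]
  rw [ZMod.val_natCast]

theorem pow_zmod_val_mul {M : Type*} [Monoid M] {p : ℕ} [NeZero p] {ζ : M} (hζ : ζ ^ p = 1)
    (a b : ZMod p) : ζ ^ (a * b).val = (ζ ^ a.val) ^ b.val := by
  rw [← pow_mul, ← pow_zmod_val_natCast hζ (a.val * b.val), Nat.cast_mul, ZMod.natCast_zmod_val,
    ZMod.natCast_zmod_val]

theorem pow_zmod_val_neg_one {G : Type*} [DivisionMonoid G] {p : ℕ} [NeZero p] {ζ : G}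
    (hζ : ζ ^ p = 1) : ζ ^ (-1 : ZMod p).val = ζ⁻¹ := by
  obtain ⟨p, rfl⟩ := Nat.exists_eq_succ_of_ne_zero (NeZero.ne p)
  rw [ZMod.val_neg_one]
  exact eq_inv_of_mul_eq_one_left (by rwa [← pow_succ])

open scoped Classical in
theorem sum_ite_mem_smul_eq_sum_subgroup {G S M : Type*} [Group G] [Fintype G] [Semiring S]
    [AddCommMonoid M] [Module S M] (H : Subgroup G) (f : G → M) :
    ∑ a, (if a ∈ H then (1 : S) else 0) • f a = ∑ h : H, f h := by
  simp only [ite_smul, one_smul, zero_smul, ← Finset.sum_filter]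
  exact Finset.sum_subtype _ (by simp) f

theorem Subgroup.index_zpowers_pow {G : Type*} [Group G] [Finite G] {u : G}
    (hu : orderOf u = Nat.card G) {n : ℕ} (hn : n ∣ Nat.card G) :
    (zpowers (u ^ n)).index = n := by
  have hn0 : n ≠ 0 := by rintro rfl; exact Nat.card_pos.ne' (zero_dvd_iff.1 hn)
  have hcard_pos : 0 < Nat.card G / n := Nat.div_pos (Nat.le_of_dvd Nat.card_pos hn) (by omega)
  have := (zpowers (u ^ n)).index_mul_card
  rw [Nat.card_zpowers, orderOf_pow_of_dvd hn0 (hu ▸ hn), hu] at this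
  exact Nat.eq_of_mul_eq_mul_right hcard_pos (this.trans (Nat.mul_div_cancel' hn).symm)

section GaussianPeriod

open scoped Classical

variable {R : Type*} [CommSemiring R] {p : ℕ} [NeZero p]

noncomputable def gaussianPeriod (ζ : R) (H : Subgroup (ZMod p)ˣ) : R :=
  ∑ h : H, ζ ^ ((h : (ZMod p)ˣ) : ZMod p).val

theorem map_gaussianPeriod {S F : Type*} [CommSemiring S] [FunLike F R S] [RingHomClass F R S]
    (f : F) (ζ : R) (H : Subgroup (ZMod p)ˣ) :
    f (gaussianPeriod ζ H) = gaussianPeriod (f ζ) H := by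
  simp only [gaussianPeriod, map_sum, map_pow]

theorem gaussianPeriod_zpowers (ζ : R) (g : (ZMod p)ˣ) :
    gaussianPeriod ζ (Subgroup.zpowers g) =
      ∑ j ∈ Finset.range (orderOf g), ζ ^ ((g : ZMod p) ^ j).val := by
  rw [gaussianPeriod, ← Fin.sum_univ_eq_sum_range (fun j => ζ ^ ((g : ZMod p) ^ j).val),
    ← (finEquivZPowers (isOfFinOrder_of_finite g)).sum_comp]
  simp [finEquivZPowers_apply]

variable {ζ : R} (H : Subgroup (ZMod p)ˣ)

theorem gaussianPeriod_pow (hζ : ζ ^ p = 1) (t : (ZMod p)ˣ) :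
    gaussianPeriod (ζ ^ (t : ZMod p).val) H =
      ∑ h : H, ζ ^ ((t * h : (ZMod p)ˣ) : ZMod p).val := by
  simp only [gaussianPeriod, Units.val_mul, pow_zmod_val_mul hζ]

theorem gaussianPeriod_pow_of_mem (hζ : ζ ^ p = 1) {t : (ZMod p)ˣ} (ht : t ∈ H) :
    gaussianPeriod (ζ ^ (t : ZMod p).val) H = gaussianPeriod ζ H := by
  rw [gaussianPeriod_pow H hζ]
  exact Fintype.sum_equiv (Equiv.mulLeft (⟨t, ht⟩ : H)) _ _ fun _ => rfl

end GaussianPeriod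

section LinearIndependence

open scoped Classical

variable {L : Type*} [Field L] [CharZero L] {p : ℕ} [hp : Fact p.Prime] {ζ : L}

-- `ζ, ζ², …, ζ^(p-1)` is `ζ` times the power basis `1, ζ, …, ζ^(p-2)` of `ℚ(ζ)`.
theorem IsPrimitiveRoot.linearIndependent_pow_units (hζ : IsPrimitiveRoot ζ p) :
    LinearIndependent ℚ fun a : (ZMod p)ˣ => ζ ^ (a : ZMod p).val := by
  have hdeg : (minpoly ℚ ζ).natDegree = p - 1 := by
    rw [← cyclotomic_eq_minpoly_rat hζ hp.out.pos, natDegree_cyclotomic, Nat.totient_prime hp.out]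
  have hpow : LinearIndependent ℚ fun i : Fin (p - 1) => ζ ^ (i : ℕ) := by
    have h := linearIndependent_pow (K := ℚ) ζ
    rwa [hdeg] at h
  have hshift : LinearIndependent ℚ fun i : Fin (p - 1) => ζ * ζ ^ (i : ℕ) :=
    hpow.map' (LinearMap.mulLeft ℚ ζ)
      (LinearMap.ker_eq_bot.2 (mul_right_injective₀ (hζ.ne_zero hp.out.ne_zero)))
  have hval_pos (a : (ZMod p)ˣ) : 0 < (a : ZMod p).val := ZMod.val_pos.2 a.ne_zero
  let index (a : (ZMod p)ˣ) : Fin (p - 1) :=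
    ⟨(a : ZMod p).val - 1, by have := ZMod.val_lt (a : ZMod p); have := hval_pos a; omega⟩
  have hindex : Function.Injective index := fun a b hab => by
    have := hval_pos a
    have := hval_pos b
    exact Units.ext (ZMod.val_injective p (by simp only [index, Fin.mk.injEq] at hab; omega))
  convert hshift.comp index hindex with a
  rw [Function.comp_apply, ← pow_succ', Nat.sub_add_cancel (hval_pos a)]

theorem IsPrimitiveRoot.mem_of_gaussianPeriod_pow_eq (hζ : IsPrimitiveRoot ζ p)
    {H : Subgroup (ZMod p)ˣ} {t : (ZMod p)ˣ}
    (h : gaussianPeriod (ζ ^ (t : ZMod p).val) H = gaussianPeriod ζ H) : t ∈ H := by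
  set v : (ZMod p)ˣ → L := fun a => ζ ^ (a : ZMod p).val
  have hcoset : ∑ a, (if t⁻¹ * a ∈ H then (1 : ℚ) else 0) • v a =
      gaussianPeriod (ζ ^ (t : ZMod p).val) H := by
    rw [gaussianPeriod_pow H hζ.pow_eq_one,
      ← sum_ite_mem_smul_eq_sum_subgroup (S := ℚ) H (v <| t * ·),
      ← Equiv.sum_comp (Equiv.mulLeft t)]
    simp [v]
  have hzero :
      ∑ a, ((if t⁻¹ * a ∈ H then (1 : ℚ) else 0) - if a ∈ H then 1 else 0) • v a = 0 := by
    simp only [sub_smul, Finset.sum_sub_distrib, hcoset, sum_ite_mem_smul_eq_sum_subgroup, h]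
    exact sub_self _
  have hcoeff := Fintype.linearIndependent_iff.1 hζ.linearIndependent_pow_units _ hzero t
  by_contra ht
  simp [H.one_mem, ht] at hcoeff

theorem IsPrimitiveRoot.gaussianPeriod_pow_eq_iff (hζ : IsPrimitiveRoot ζ p)
    (H : Subgroup (ZMod p)ˣ) (t : (ZMod p)ˣ) :
    gaussianPeriod (ζ ^ (t : ZMod p).val) H = gaussianPeriod ζ H ↔ t ∈ H :=
  ⟨hζ.mem_of_gaussianPeriod_pow_eq, gaussianPeriod_pow_of_mem H hζ.pow_eq_one⟩

end LinearIndependence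

theorem IsPrimitiveRoot.autToPow_surjective {n : ℕ} [NeZero n] {K L : Type*} [Field K]
    [CommRing L] [IsDomain L] [Algebra K L] [IsCyclotomicExtension {n} K L]
    (h : Irreducible (cyclotomic n K)) {μ : L} (hμ : IsPrimitiveRoot μ n) :
    Function.Surjective (hμ.autToPow K) := by
  have : ⇑(hμ.autToPow K) = IsCyclotomicExtension.autEquivPow L h := by
    funext σ
    simp only [IsCyclotomicExtension.autEquivPow_apply, MonoidHom.toFun_eq_coe,
      IsPrimitiveRoot.autToPow_eq_modularCyclotomicCharacter]
  exact this ▸ (IsCyclotomicExtension.autEquivPow L h).surjective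

theorem IsCyclotomicExtension.isCyclic_gal_rat (p : ℕ) [Fact p.Prime] (K : Type*) [Field K]
    [CharZero K] [IsCyclotomicExtension {p} ℚ K] : IsCyclic Gal(K/ℚ) :=
  isCyclic_of_surjective _
    (autEquivPow K (cyclotomic.irreducible_rat (NeZero.pos p))).symm.surjective

theorem IsPrimitiveRoot.isCyclotomicExtension_adjoin {F L : Type*} [Field F] [Field L]
    [Algebra F L] {n : ℕ} [NeZero n] {ζ : L} (hζ : IsPrimitiveRoot ζ n) :
    IsCyclotomicExtension {n} F F⟮ζ⟯ := by
  have hζint : IsIntegral F ζ := .of_pow (NeZero.pos n) (hζ.pow_eq_one ▸ isIntegral_one)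
  change IsCyclotomicExtension {n} F F⟮ζ⟯.toSubalgebra
  rw [adjoin_simple_toSubalgebra_of_isAlgebraic hζint.isAlgebraic]
  exact hζ.adjoin_isCyclotomicExtension F

theorem IntermediateField.mem_fixingSubgroup_adjoin_simple_iff {F E : Type*} [Field F] [Field E]
    [Algebra F E] (σ : Gal(E/F)) (x : E) : σ ∈ F⟮x⟯.fixingSubgroup ↔ σ x = x := by
  refine ⟨fun h => (mem_fixingSubgroup_iff _ σ).1 h x (mem_adjoin_simple_self F x), fun h => ?_⟩
  have hext : (σ : E →ₐ[F] E).comp F⟮x⟯.val = F⟮x⟯.val :=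
    adjoin_algHom_ext F fun y hy => by simpa [Set.mem_singleton_iff.1 hy] using h
  exact (mem_fixingSubgroup_iff _ σ).2 fun y hy => congr($hext ⟨y, hy⟩)

theorem IntermediateField.isCyclic_gal {F E : Type*} [Field F] [Field E] [Algebra F E]
    [IsGalois F E] [IsCyclic Gal(E/F)] (M : IntermediateField F E) : IsCyclic Gal(M/F) :=
  have := IsAbelianGalois.of_isCyclic (K := F) (L := E)
  isCyclic_of_surjective _ (AlgEquiv.restrictNormalHom_surjective (F := F) (K₁ := M) (E := E))

section Cyclotomic

variable {K : Type*} [Field K] [CharZero K] {p : ℕ} [hp : Fact p.Prime] {ζ : K}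

theorem IsPrimitiveRoot.fixingSubgroup_adjoin_gaussianPeriod (hζ : IsPrimitiveRoot ζ p)
    (H : Subgroup (ZMod p)ˣ) :
    ℚ⟮gaussianPeriod ζ H⟯.fixingSubgroup = H.comap (hζ.autToPow ℚ) := by
  ext σ
  rw [mem_fixingSubgroup_adjoin_simple_iff, Subgroup.mem_comap, ← hζ.gaussianPeriod_pow_eq_iff,
    autToPow_spec, map_gaussianPeriod]

theorem IsPrimitiveRoot.finrank_adjoin_gaussianPeriod_of_isCyclotomicExtension
    [IsCyclotomicExtension {p} ℚ K] (hζ : IsPrimitiveRoot ζ p) (H : Subgroup (ZMod p)ˣ) :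
    Module.finrank ℚ ℚ⟮gaussianPeriod ζ H⟯ = H.index := by
  have := IsCyclotomicExtension.isGalois {p} ℚ K
  rw [finrank_eq_fixingSubgroup_index, hζ.fixingSubgroup_adjoin_gaussianPeriod,
    H.index_comap_of_surjective (hζ.autToPow_surjective (cyclotomic.irreducible_rat hp.out.pos))]

end Cyclotomic

section CharZero

variable {L : Type*} [Field L] [CharZero L] {p : ℕ} [Fact p.Prime] {ζ : L}

noncomputable def adjoinGaussianPeriodEquiv (ζ : L) (H : Subgroup (ZMod p)ˣ) :
    ℚ⟮gaussianPeriod (AdjoinSimple.gen ℚ ζ) H⟯ ≃ₐ[ℚ] ℚ⟮gaussianPeriod ζ H⟯ :=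
  (ℚ⟮_⟯.equivMap ℚ⟮ζ⟯.val).trans
    (equivOfEq (by rw [adjoin_map, Set.image_singleton, map_gaussianPeriod]; rfl))

theorem IsPrimitiveRoot.finrank_adjoin_gaussianPeriod (hζ : IsPrimitiveRoot ζ p)
    (H : Subgroup (ZMod p)ˣ) : Module.finrank ℚ ℚ⟮gaussianPeriod ζ H⟯ = H.index := by
  have : IsCyclotomicExtension {p} ℚ ℚ⟮ζ⟯ := hζ.isCyclotomicExtension_adjoin
  have hgen : IsPrimitiveRoot (AdjoinSimple.gen ℚ ζ) p :=
    IsPrimitiveRoot.coe_submonoidClass_iff.1 hζ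
  rw [← (adjoinGaussianPeriodEquiv ζ H).toLinearEquiv.finrank_eq,
    hgen.finrank_adjoin_gaussianPeriod_of_isCyclotomicExtension]

theorem IsPrimitiveRoot.isCyclic_gal_adjoin_gaussianPeriod (hζ : IsPrimitiveRoot ζ p)
    (H : Subgroup (ZMod p)ˣ) : IsCyclic Gal(ℚ⟮gaussianPeriod ζ H⟯/ℚ) := by
  have : IsCyclotomicExtension {p} ℚ ℚ⟮ζ⟯ := hζ.isCyclotomicExtension_adjoin
  have := IsCyclotomicExtension.isGalois {p} ℚ ℚ⟮ζ⟯
  have := IsCyclotomicExtension.isCyclic_gal_rat p ℚ⟮ζ⟯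
  have : IsCyclic Gal(ℚ⟮gaussianPeriod (AdjoinSimple.gen ℚ ζ) H⟯/ℚ) := isCyclic_gal _
  exact isCyclic_of_surjective _ (adjoinGaussianPeriodEquiv ζ H).autCongr.surjective

end CharZero

theorem neg_one_notMem_of_odd_natCard {p : ℕ} [Fact p.Prime] (hp : p ≠ 2)
    {H : Subgroup (ZMod p)ˣ} (hH : Odd (Nat.card H)) : -1 ∉ H := fun hmem => by
  have horder : orderOf (-1 : (ZMod p)ˣ) = 2 := by
    rw [← orderOf_units, Units.val_neg, Units.val_one, orderOf_neg_one, ZMod.ringChar_zmod_n,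
      if_neg hp]
  have := horder ▸ H.orderOf_dvd_natCard hmem
  exact Nat.not_even_iff_odd.2 hH (even_iff_two_dvd.2 this)

theorem IsPrimitiveRoot.im_gaussianPeriod_ne_zero {p : ℕ} [Fact p.Prime] {ζ : ℂ}
    (hζ : IsPrimitiveRoot ζ p) {H : Subgroup (ZMod p)ˣ} (hH : -1 ∉ H) :
    (gaussianPeriod ζ H).im ≠ 0 := fun him => by
  have hconj : starRingEnd ℂ ζ = ζ ^ ((-1 : (ZMod p)ˣ) : ZMod p).val := by
    rw [Units.val_neg, Units.val_one, pow_zmod_val_neg_one hζ.pow_eq_one,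
      Complex.inv_eq_conj (hζ.norm'_eq_one (NeZero.ne p))]
  rw [← hζ.gaussianPeriod_pow_eq_iff, ← hconj, ← map_gaussianPeriod] at hH
  exact hH (Complex.conj_eq_iff_im.2 him)

theorem gaussian_period_not_real_general
    (q : ℕ) (hq : q.Prime) (m : ℕ) (hm : orderOf (m : ZMod q) = q - 1)
    (n : ℕ) (hn : 1 < n) (hnq : n ∣ q - 1) (hodd : Odd ((q - 1) / n))
    (ζ : ℂ) (hζ : ζ = Complex.exp (2 * Real.pi * Complex.I / q))
    (α : ℂ) (hα : α = ∑ j ∈ Finset.range ((q - 1) / n), ζ ^ (m ^ (j * n))) :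
    α.im ≠ 0 ∧
    ¬ ((IntermediateField.adjoin ℚ ({α} : Set ℂ) : Set ℂ) ⊆ Set.range ((↑) : ℝ → ℂ)) ∧
    Module.finrank ℚ (IntermediateField.adjoin ℚ ({α} : Set ℂ)) = n ∧
    IsCyclic ((IntermediateField.adjoin ℚ ({α} : Set ℂ)) ≃ₐ[ℚ]
      (IntermediateField.adjoin ℚ ({α} : Set ℂ))) := by
  have := Fact.mk hq
  have hζp : IsPrimitiveRoot ζ q := hζ ▸ Complex.isPrimitiveRoot_exp q hq.ne_zero
  have hq1 : 2 ≤ q - 1 := hn.trans_le (Nat.le_of_dvd (by have := hq.two_le; omega) hnq)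
  obtain ⟨u, hu⟩ : IsUnit (m : ZMod q) := (orderOf_pos_iff.1 (by omega)).isUnit
  have hcard_units : Nat.card (ZMod q)ˣ = q - 1 := by
    rw [Nat.card_eq_fintype_card, ZMod.card_units_eq_totient, Nat.totient_prime hq]
  have hu_gen : orderOf u = q - 1 := by rw [← orderOf_units, hu, hm]
  set H := Subgroup.zpowers (u ^ n)
  have hcard : Nat.card H = (q - 1) / n := by
    rw [Nat.card_zpowers, orderOf_pow_of_dvd (by omega) (hu_gen ▸ hnq), hu_gen]
  have hindex : H.index = n :=
    Subgroup.index_zpowers_pow (hu_gen.trans hcard_units.symm) (hcard_units ▸ hnq)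
  have hαH : α = gaussianPeriod ζ H := by
    rw [hα, gaussianPeriod_zpowers, ← hcard, Nat.card_zpowers]
    refine Finset.sum_congr rfl fun j _ => ?_
    rw [Units.val_pow_eq_pow_val, hu, ← pow_mul, ← Nat.cast_pow,
      pow_zmod_val_natCast hζp.pow_eq_one, mul_comm]
  have him : α.im ≠ 0 :=
    hαH ▸ hζp.im_gaussianPeriod_ne_zero (neg_one_notMem_of_odd_natCard (by omega) (hcard ▸ hodd))
  refine ⟨him, fun hreal => ?_, ?_, ?_⟩
  · obtain ⟨r, hr⟩ := hreal (mem_adjoin_simple_self ℚ α)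
    exact him (hr ▸ Complex.ofReal_im r)
  · rw [hαH, hζp.finrank_adjoin_gaussianPeriod, hindex]
  · rw [hαH]
    exact hζp.isCyclic_gal_adjoin_gaussianPeriod H

/-- Let `q` be a prime, `m` a primitive root modulo `q`, and `n > 1` an even divisor of
`q - 1` such that `(q - 1)/n` is odd. Let `ζ_q = exp(2πi/q)` and let
`α_n = Σ_{j=0}^{(q-1)/n - 1} ζ_q^(m^(j*n))` be the Gaussian period of degree `n`. Then
`α_n` is not real; in particular `ℚ(α_n)/ℚ` is a non-real cyclic extension of degree `n`. -/
theorem gaussian_period_not_real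
    (q : ℕ) (hq : q.Prime) (m : ℕ) (hm : orderOf (m : ZMod q) = q - 1)
    (n : ℕ) (hn : 1 < n) (hneven : Even n) (hnq : n ∣ q - 1) (hodd : Odd ((q - 1) / n))
    (ζ : ℂ) (hζ : ζ = Complex.exp (2 * Real.pi * Complex.I / q))
    (α : ℂ) (hα : α = ∑ j ∈ Finset.range ((q - 1) / n), ζ ^ (m ^ (j * n))) :
    α.im ≠ 0 ∧
    ¬ ((IntermediateField.adjoin ℚ ({α} : Set ℂ) : Set ℂ) ⊆ Set.range ((↑) : ℝ → ℂ)) ∧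
    Module.finrank ℚ (IntermediateField.adjoin ℚ ({α} : Set ℂ)) = n ∧
    IsCyclic ((IntermediateField.adjoin ℚ ({α} : Set ℂ)) ≃ₐ[ℚ]
      (IntermediateField.adjoin ℚ ({α} : Set ℂ))) :=
  gaussian_period_not_real_general q hq m hm n hn hnq hodd ζ hζ α hα
end
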